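/- Suppose f_x(α, w) is piecewise constant on 𝒜 × 𝒲 with partition into N connected sets R₁, …, R_N on which f takes constant values c₁, …, c_N. Then there exist points α_min = α₀ < α₁ < ⋯ < α_t = α_max with t = O(N) such that the function u*(α) = sup_{w ∈ 𝒲} f_x(α, w) is constant on each open interval (α_i, α_{i+1}). Concretely, the partition points can be taken to be the values inf{α : ∃w, (α,w) ∈ R_j} and sup{α : ∃w, (α,w) ∈ R_j} over j ∈ [N], giving at most 2N + 2 points. -/

import Mathlib

/-!
Each `R j` is connected, so its projection `Prod.fst '' R j` is an interval of `[αmin, αmax]`.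
The slice of `fx` at `α` takes exactly the values `c j` of those `j` whose projection
contains `α`, so `u*(α)` only changes when `α` crosses an endpoint of one of these intervals.
-/

open Set

theorem image_singleton_prod_eq_image_of_iUnion_eq_prod {ι X Y β : Type*}
    {R : ι → Set (X × Y)} {S : Set X} {W : Set Y} (hcover : ⋃ i, R i = S ×ˢ W)
    {f : X × Y → β} {c : ι → β} (hf : ∀ i, ∀ p ∈ R i, f p = c i) {x : X}
    (hx : x ∈ S) :
    f '' ({x} ×ˢ W) = c '' {i | x ∈ Prod.fst '' R i} := by
  ext v
  constructor
  · rintro ⟨p, ⟨hpx, hpW⟩, rfl⟩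
    have hp : p ∈ ⋃ i, R i := hcover ▸ ⟨(mem_singleton_iff.mp hpx) ▸ hx, hpW⟩
    obtain ⟨i, hpi⟩ := mem_iUnion.mp hp
    exact ⟨i, ⟨p, hpi, mem_singleton_iff.mp hpx⟩, (hf i p hpi).symm⟩
  · rintro ⟨i, ⟨p, hpi, hpx⟩, rfl⟩
    have hpW : p.2 ∈ W := (hcover ▸ subset_iUnion R i hpi : p ∈ S ×ˢ W).2
    exact ⟨p, ⟨hpx, hpW⟩, hf i p hpi⟩

theorem IsConnected.mem_iff_mem_of_csInf_csSup_notMem_Ioo {α : Type*}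
    [ConditionallyCompleteLinearOrder α] [TopologicalSpace α] [OrderTopology α]
    [DenselyOrdered α] {s : Set α} (hs : IsConnected s) (hb : BddBelow s) (ha : BddAbove s)
    {a b x y : α} (hinf : sInf s ∉ Ioo a b) (hsup : sSup s ∉ Ioo a b)
    (hx : x ∈ Ioo a b) (hy : y ∈ Ioo a b) : x ∈ s ↔ y ∈ s := by
  suffices key : ∀ {x y}, x ∈ Ioo a b → y ∈ Ioo a b → x ∈ s → y ∈ s from
    ⟨key hx hy, key hy hx⟩
  intro x y hx hy hxs
  have hinf_le : sInf s ≤ a := not_lt.mp fun h => hinf ⟨h, (csInf_le hb hxs).trans_lt hx.2⟩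
  have hle_sup : b ≤ sSup s := not_lt.mp fun h => hsup ⟨hx.1.trans_le (le_csSup ha hxs), h⟩
  exact hs.Ioo_csInf_csSup_subset hb ha (Ioo_subset_Ioo hinf_le hle_sup hy)

theorem Finset.card_insert_insert_image_union_image_le {ι β : Type*} [DecidableEq β]
    (s : Finset ι) (a b : β) (f g : ι → β) :
    (insert a (insert b (s.image f ∪ s.image g))).card ≤ 2 * s.card + 2 := by
  have := card_image_le (s := s) (f := f)
  have := card_image_le (s := s) (f := g)
  have := card_union_le (s.image f) (s.image g)
  have := card_insert_le b (s.image f ∪ s.image g)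
  have := card_insert_le a (insert b (s.image f ∪ s.image g))
  omega

theorem stmt_16_general (d N : ℕ) (αmin αmax : ℝ)
    (W : Set (Fin d → ℝ))
    (R : Fin N → Set (ℝ × (Fin d → ℝ))) (c : Fin N → ℝ)
    (hconn : ∀ i, IsConnected (R i))
    (hcover : (⋃ i, R i) = Set.Icc αmin αmax ×ˢ W)
    (fx : ℝ × (Fin d → ℝ) → ℝ) (hf : ∀ i, ∀ p ∈ R i, fx p = c i) :
    ∃ T : Finset ℝ, T.card ≤ 2 * N + 2 ∧ αmin ∈ T ∧ αmax ∈ T ∧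
      (∀ t ∈ T, t = αmin ∨ t = αmax ∨
        ∃ j, t = sInf (Prod.fst '' R j) ∨ t = sSup (Prod.fst '' R j)) ∧
      ∀ a ∈ T, ∀ b ∈ T, Set.Ioo a b ∩ (↑T : Set ℝ) = ∅ →
        ∀ α ∈ Set.Ioo a b ∩ Set.Icc αmin αmax,
        ∀ α' ∈ Set.Ioo a b ∩ Set.Icc αmin αmax,
          sSup (fx '' ({α} ×ˢ W)) = sSup (fx '' ({α'} ×ˢ W)) := by
  classical
  set I : Fin N → Set ℝ := fun j => Prod.fst '' R j
  have hI : ∀ j, I j ⊆ Icc αmin αmax := fun j =>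
    image_subset_iff.mpr fun p hp => (hcover ▸ subset_iUnion R j hp : p ∈ _ ×ˢ W).1
  set T : Finset ℝ := insert αmin (insert αmax ((Finset.univ.image fun j => sInf (I j)) ∪
    (Finset.univ.image fun j => sSup (I j))))
  refine ⟨T, ?_, by simp [T], by simp [T], ?_, ?_⟩
  · simpa using Finset.card_insert_insert_image_union_image_le (Finset.univ : Finset (Fin N)) αmin
      αmax _ _
  · intro t ht
    simp only [T, Finset.mem_insert, Finset.mem_union, Finset.mem_image, Finset.mem_univ,
      true_and] at ht
    rcases ht with rfl | rfl | ⟨j, rfl⟩ | ⟨j, rfl⟩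
    exacts [.inl rfl, .inr (.inl rfl), .inr (.inr ⟨j, .inl rfl⟩), .inr (.inr ⟨j, .inr rfl⟩)]
  · intro a _ b _ hgap α hα α' hα'
    have hnot : ∀ t ∈ T, t ∉ Ioo a b := fun t ht h =>
      eq_empty_iff_forall_notMem.mp hgap t ⟨h, ht⟩
    have hsame : {j | α ∈ I j} = {j | α' ∈ I j} := by
      ext j
      exact ((hconn j).image _ continuous_fst.continuousOn).mem_iff_mem_of_csInf_csSup_notMem_Ioo
        (bddBelow_Icc.mono (hI j)) (bddAbove_Icc.mono (hI j)) (hnot _ (by simp [T, I]))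
        (hnot _ (by simp [T, I])) hα.1 hα'.1
    rw [image_singleton_prod_eq_image_of_iUnion_eq_prod hcover hf hα.2,
      image_singleton_prod_eq_image_of_iUnion_eq_prod hcover hf hα'.2, hsame]

theorem stmt_16 (d N : ℕ) (αmin αmax wmin wmax : ℝ) (hα : αmin < αmax)
    (W : Set (Fin d → ℝ))
    (hW : W = Set.Icc (fun _ => wmin) (fun _ => wmax)) (hWne : W.Nonempty)
    (R : Fin N → Set (ℝ × (Fin d → ℝ))) (c : Fin N → ℝ)
    (hconn : ∀ i, IsConnected (R i))
    (hcover : (⋃ i, R i) = Set.Icc αmin αmax ×ˢ W)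
    (hdisj : Pairwise (Function.onFun Disjoint R))
    (fx : ℝ × (Fin d → ℝ) → ℝ) (hf : ∀ i, ∀ p ∈ R i, fx p = c i) :
    ∃ T : Finset ℝ, T.card ≤ 2 * N + 2 ∧ αmin ∈ T ∧ αmax ∈ T ∧
      (∀ t ∈ T, t = αmin ∨ t = αmax ∨
        ∃ j, t = sInf (Prod.fst '' R j) ∨ t = sSup (Prod.fst '' R j)) ∧
      ∀ a ∈ T, ∀ b ∈ T, Set.Ioo a b ∩ (↑T : Set ℝ) = ∅ →
        ∀ α ∈ Set.Ioo a b ∩ Set.Icc αmin αmax,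
        ∀ α' ∈ Set.Ioo a b ∩ Set.Icc αmin αmax,
          sSup (fx '' ({α} ×ˢ W)) = sSup (fx '' ({α'} ×ˢ W)) :=
  stmt_16_general d N αmin αmax W R c hconn hcover fx hf
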